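/- arXiv:2112.03665 — 5 statements merged into one kernel-verified Lean document; each statement's English description precedes it below -/
import Mathlib

section
/- Let E, A ∈ ℂ^{n×n}, B ∈ ℂ^{n×m}, and suppose s₀E − A is invertible. Then the pair (E(s₀E − A)^{-1}, B) satisfies the PBH rank condition rank([sI − E(s₀E − A)^{-1}, B]) = n for all s ∈ ℂ if and only if rank([sE − A, B]) = n for all s ∈ ℂ and rank([E, B]) = n. -/
/-!
With `P = s₀ E - A`, right multiplication by `P⁻¹` shows that `[s I - E P⁻¹, B]` has the rank of
`[s P - E, B]`. At `s = 0` this is `[-E, B]`; for `s ≠ 0` it is `[s ((s₀ - s⁻¹) E - A), B]`, which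
has the rank of `[(s₀ - s⁻¹) E - A, B]`. As `s ↦ s₀ - s⁻¹` maps `ℂ \ {0}` onto `ℂ \ {s₀}`, and
`[P, B]` has full rank because `P` is invertible, the two conditions coincide.
-/

open Matrix

namespace Matrix

variable {l n p R : Type*} [Fintype n] [Fintype p] [DecidableEq n] [CommRing R]

theorem rank_fromCols_mul_left_of_isUnit_det [DecidableEq p] (X : Matrix l n R)
    (M : Matrix n n R) (B : Matrix l p R) (hM : IsUnit M.det) :
    (fromCols (X * M) B).rank = (fromCols X B).rank := by
  have hblock : fromCols (X * M) B = fromCols X B * fromBlocks M 0 0 (1 : Matrix p p R) := by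
    simp [fromCols_mul_fromBlocks]
  rw [hblock, rank_mul_eq_left_of_isUnit_det]
  simpa [det_fromBlocks_zero₂₁] using hM

theorem rank_fromCols_smul_left [DecidableEq p] {c : R} (hc : IsUnit c) (X : Matrix l n R)
    (B : Matrix l p R) :
    (fromCols (c • X) B).rank = (fromCols X B).rank := by
  rw [← Matrix.mul_one X, ← Matrix.mul_smul, rank_fromCols_mul_left_of_isUnit_det, Matrix.mul_one]
  simpa [det_smul] using hc.pow (Fintype.card n)

theorem rank_fromCols_neg_left [DecidableEq p] (X : Matrix l n R) (B : Matrix l p R) :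
    (fromCols (-X) B).rank = (fromCols X B).rank := by
  simpa using rank_fromCols_smul_left isUnit_one.neg X B

theorem rank_fromCols_of_isUnit [Nontrivial R] {X : Matrix n n R} (hX : IsUnit X)
    (B : Matrix n p R) : (fromCols X B).rank = Fintype.card n := by
  refine le_antisymm (rank_le_card_height _) ?_
  calc Fintype.card n = X.rank := (rank_of_isUnit X hX).symm
    _ = ((fromCols X B).submatrix id Sum.inl).rank := by congr 1
    _ ≤ (fromCols X B).rank := rank_submatrix_le _ _ _

theorem rank_fromCols_smul_one_sub_mul_inv [DecidableEq p] {P : Matrix n n R} (hP : IsUnit P.det)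
    (s : R) (E : Matrix n n R) (B : Matrix n p R) :
    (fromCols (s • 1 - E * P⁻¹) B).rank = (fromCols (s • P - E) B).rank := by
  rw [← rank_fromCols_mul_left_of_isUnit_det (s • P - E) P⁻¹ B (isUnit_nonsing_inv_det P hP),
    Matrix.sub_mul, Matrix.smul_mul, mul_nonsing_inv P hP]

end Matrix

theorem smul_smul_sub_sub_eq_smul_inv {K M : Type*} [Field K] [AddCommGroup M] [Module K M]
    {s : K} (hs : s ≠ 0) (s₀ : K) (E A : M) :
    s • (s₀ • E - A) - E = s • ((s₀ - s⁻¹) • E - A) := by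
  rw [smul_sub, smul_sub, smul_smul, smul_smul, mul_sub, mul_inv_cancel₀ hs, sub_smul, one_smul,
    sub_right_comm]

theorem stmt_3 {n m : ℕ} (E A : Matrix (Fin n) (Fin n) ℂ) (B : Matrix (Fin n) (Fin m) ℂ)
    (s₀ : ℂ) (hreg : IsUnit (s₀ • E - A)) :
    (∀ s : ℂ, (Matrix.fromCols (s • (1 : Matrix (Fin n) (Fin n) ℂ) - E * (s₀ • E - A)⁻¹) B).rank = n)
      ↔ ((∀ s : ℂ, (Matrix.fromCols (s • E - A) B).rank = n)
          ∧ (Matrix.fromCols E B).rank = n) := by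
  have hdet : IsUnit (s₀ • E - A).det := (isUnit_iff_isUnit_det _).mp hreg
  simp_rw [rank_fromCols_smul_one_sub_mul_inv hdet]
  have at_zero : (fromCols ((0 : ℂ) • (s₀ • E - A) - E) B).rank = (fromCols E B).rank := by
    rw [zero_smul, zero_sub, rank_fromCols_neg_left]
  have off_zero : ∀ s : ℂ, s ≠ 0 → (fromCols (s • (s₀ • E - A) - E) B).rank
      = (fromCols ((s₀ - s⁻¹) • E - A) B).rank := fun s hs => by
    rw [smul_smul_sub_sub_eq_smul_inv hs, rank_fromCols_smul_left hs.isUnit]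
  constructor
  · intro h
    refine ⟨fun t => ?_, at_zero ▸ h 0⟩
    rcases eq_or_ne t s₀ with rfl | ht
    · simpa using rank_fromCols_of_isUnit hreg B
    · simpa only [off_zero _ (inv_ne_zero (sub_ne_zero.2 ht.symm)), inv_inv, sub_sub_cancel]
        using h (s₀ - t)⁻¹
  · rintro ⟨h_pencil, h_E⟩ s
    rcases eq_or_ne s 0 with rfl | hs
    · rw [at_zero, h_E]
    · rw [off_zero s hs, h_pencil]
end

section
/- Let E, A ∈ ℂ^{n×n} with the pencil (E, A) regular (∃ s with det(sE − A) ≠ 0), B ∈ ℂ^{n×m}. If rank([B, A_E B, …, A_E^{n−1} B]) = n, where A_E = E(s₀E − A)^{-1} for some s₀ with s₀E − A invertible, then rank([sE − A, B]) = n for all s ∈ ℂ. -/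
/-!
A vector `z` in the left kernel of `[sE - A, B]` satisfies `z (s₀E - A) = (s₀ - s) z E`, hence
`(s₀ - s) z A_E = z`. Either `s = s₀` and `z = 0`, or `z` is a left eigenvector of `A_E`; then
`z A_Eᵏ B` is a multiple of `z B = 0`, so `z` lies in the left kernel of the controllability matrix
and vanishes by its full rank.
-/

open Matrix

/-- The Kalman controllability matrix `[B, A B, A² B, …, A^{n-1} B]`,
indexed so that block `k` (for `k : Fin n`) is `A ^ k * B`. -/
noncomputable def ctrbMatrix {n m : ℕ} (A : Matrix (Fin n) (Fin n) ℂ)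
    (B : Matrix (Fin n) (Fin m) ℂ) : Matrix (Fin n) (Fin n × Fin m) ℂ :=
  fun i p => (A ^ (p.1 : ℕ) * B) i p.2

namespace Matrix

theorem rank_eq_card_iff_vecMul_eq_zero {K m n : Type*} [Field K] [Fintype m] [Fintype n]
    (M : Matrix m n K) : M.rank = Fintype.card m ↔ ∀ z : m → K, z ᵥ* M = 0 → z = 0 := by
  rw [M.rank_eq_finrank_span_row, ← Set.finrank, eq_comm,
    ← linearIndependent_iff_card_eq_finrank_span, ← vecMul_injective_iff, ← coe_vecMulLinear,
    injective_iff_map_eq_zero]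
  rfl

theorem vecMul_fromCols_eq_zero_iff {R m n₁ n₂ : Type*} [Semiring R] [Fintype m]
    (z : m → R) (A₁ : Matrix m n₁ R) (A₂ : Matrix m n₂ R) :
    z ᵥ* fromCols A₁ A₂ = 0 ↔ z ᵥ* A₁ = 0 ∧ z ᵥ* A₂ = 0 := by
  simp [vecMul_fromCols, funext_iff]

theorem vecMul_pow_eq_pow_smul {R m : Type*} [CommSemiring R] [Fintype m] [DecidableEq m]
    {M : Matrix m m R} {z : m → R} {μ : R} (hz : z ᵥ* M = μ • z) (k : ℕ) :
    z ᵥ* (M ^ k) = μ ^ k • z := by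
  induction k with
  | zero => simp
  | succ k ih => rw [pow_succ, ← vecMul_vecMul, ih, smul_vecMul, hz, smul_smul, pow_succ]

end Matrix

theorem vecMul_ctrbMatrix_eq_zero {n m : ℕ} {M : Matrix (Fin n) (Fin n) ℂ}
    {B : Matrix (Fin n) (Fin m) ℂ} {z : Fin n → ℂ} {μ : ℂ} (hz : z ᵥ* M = μ • z)
    (hB : z ᵥ* B = 0) : z ᵥ* ctrbMatrix M B = 0 := by
  ext ⟨k, j⟩
  change (z ᵥ* (M ^ (k : ℕ) * B)) j = 0
  rw [← vecMul_vecMul, vecMul_pow_eq_pow_smul hz, smul_vecMul, hB, smul_zero, Pi.zero_apply]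

theorem sub_smul_vecMul_mul_inv_eq_self {n : Type*} [Fintype n] [DecidableEq n]
    {E A : Matrix n n ℂ} {s s₀ : ℂ} (hreg : IsUnit (s₀ • E - A)) {z : n → ℂ}
    (hz : z ᵥ* (s • E - A) = 0) :
    (s₀ - s) • (z ᵥ* (E * (s₀ • E - A)⁻¹)) = z := by
  have hzA : z ᵥ* A = s • (z ᵥ* E) := by
    rwa [vecMul_sub, vecMul_smul, sub_eq_zero, eq_comm] at hz
  have hzM : z ᵥ* (s₀ • E - A) = (s₀ - s) • (z ᵥ* E) := by
    rw [vecMul_sub, vecMul_smul, hzA, sub_smul]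
  rw [← vecMul_vecMul, ← smul_vecMul, ← hzM, vecMul_vecMul,
    mul_nonsing_inv _ ((isUnit_iff_isUnit_det _).mp hreg), vecMul_one]

theorem stmt_7 {n m : ℕ} (E A : Matrix (Fin n) (Fin n) ℂ) (B : Matrix (Fin n) (Fin m) ℂ)
    (s₀ : ℂ) (hreg : IsUnit (s₀ • E - A))
    (hK : (ctrbMatrix (E * (s₀ • E - A)⁻¹) B).rank = n) :
    ∀ s : ℂ, (Matrix.fromCols (s • E - A) B).rank = n := by
  intro s
  have hctrb := (rank_eq_card_iff_vecMul_eq_zero _).mp (hK.trans (Fintype.card_fin n).symm)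
  refine (Fintype.card_fin n ▸ rank_eq_card_iff_vecMul_eq_zero _).mpr fun z hz => ?_
  obtain ⟨hzpencil, hzB⟩ := (vecMul_fromCols_eq_zero_iff z _ _).mp hz
  have hres := sub_smul_vecMul_mul_inv_eq_self hreg hzpencil
  by_cases hs : s₀ - s = 0
  · rw [← hres, hs, zero_smul]
  · refine hctrb z (vecMul_ctrbMatrix_eq_zero (μ := (s₀ - s)⁻¹) ?_ hzB)
    rwa [eq_inv_smul_iff₀ hs]
end

section
/- Let E, A ∈ ℂ^{n×n} and s₀ ∈ ℂ with s₀E − A invertible. Set D_E = (s₀E − A)^{-1}E. Suppose T̂ is an invertible matrix with T̂^{-1} D_E T̂ = diag(Ê₁, Ê₂), where Ê₁ ∈ ℂ^{n₁×n₁} is invertible and Ê₂ ∈ ℂ^{n₂×n₂} is nilpotent. Then s₀Ê₂ − I is invertible, and defining Q = diag(Ê₁^{-1}, (s₀Ê₂ − I)^{-1}) T̂^{-1} (s₀E − A)^{-1} and P = T̂, one has QEP = diag(I_{n₁}, (s₀Ê₂ − I)^{-1}Ê₂) and QAP = diag(s₀I_{n₁} − Ê₁^{-1}, I_{n₂}),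 where (s₀Ê₂ − I)^{-1}Ê₂ is nilpotent. -/
/-!
Writing `A = s₀E - (s₀E - A)` gives `(s₀E - A)⁻¹A = s₀D_E - 1`, so `T̂` conjugates it to
`s₀ diag(Ê₁, Ê₂) - 1`. Both products `QEP` and `QAP` thereby become products of block-diagonal
matrices. The block `s₀Ê₂ - 1` is a unit because `s₀Ê₂` is nilpotent, and its inverse commutes
with `Ê₂`, which keeps `(s₀Ê₂ - 1)⁻¹Ê₂` nilpotent.
-/

open Matrix

namespace Matrix

section Square

variable {n K : Type*} [Fintype n] [DecidableEq n] [CommRing K]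

theorem nonsing_inv_smul_sub_mul_eq_smul_sub_one {E A : Matrix n n K} {s : K} (h : IsUnit (s • E - A)) :
    (s • E - A)⁻¹ * A = s • ((s • E - A)⁻¹ * E) - 1 := by
  rw [← mul_smul_comm, ← nonsing_inv_mul (s • E - A) ((isUnit_iff_isUnit_det _).mp h),
    ← Matrix.mul_sub, sub_sub_cancel]

theorem nonsing_inv_mul_smul_sub_one_mul {T : Matrix n n K} (hT : IsUnit T) (s : K)
    (D : Matrix n n K) : T⁻¹ * (s • D - 1) * T = s • (T⁻¹ * D * T) - 1 := by
  rw [Matrix.mul_sub, Matrix.sub_mul, Matrix.mul_one,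
    nonsing_inv_mul _ ((isUnit_iff_isUnit_det _).mp hT), mul_smul_comm, smul_mul_assoc]

theorem IsNilpotent.nonsing_inv_smul_sub_one_mul {N : Matrix n n K} (hN : IsNilpotent N) (s : K) :
    IsNilpotent ((s • N - 1)⁻¹ * N) := by
  have hunit : IsUnit (s • N - 1) := (hN.smul s).isUnit_sub_one
  have hcomm : Commute (hunit.unit : Matrix n n K) N := by
    rw [IsUnit.unit_spec]
    exact ((Commute.refl N).smul_left s).sub_left (Commute.one_left N)
  have hcomm_inv : Commute (s • N - 1)⁻¹ N := by
    simpa only [coe_units_inv, IsUnit.unit_spec] using hcomm.units_inv_left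
  exact hcomm_inv.isNilpotent_mul_left hN

end Square

section Blocks

variable {m n K : Type*} [Fintype m] [Fintype n] [DecidableEq m] [CommRing K]

theorem fromBlocks_nonsing_inv_mul_fromBlocks {X : Matrix m m K} (hX : IsUnit X)
    (Z Y : Matrix n n K) :
    fromBlocks X⁻¹ 0 0 Z * fromBlocks X 0 0 Y = fromBlocks 1 0 0 (Z * Y) := by
  simp [fromBlocks_multiply, nonsing_inv_mul _ ((isUnit_iff_isUnit_det _).mp hX)]

theorem fromBlocks_nonsing_inv_mul_smul_fromBlocks_sub_one [DecidableEq n] {X : Matrix m m K}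
    {Y : Matrix n n K} {s : K} (hX : IsUnit X) (hY : IsUnit (s • Y - 1)) :
    fromBlocks X⁻¹ 0 0 (s • Y - 1)⁻¹ * (s • fromBlocks X 0 0 Y - 1)
      = fromBlocks (s • 1 - X⁻¹) 0 0 1 := by
  have hblocks : s • fromBlocks X 0 0 Y - 1 = fromBlocks (s • X - 1) 0 0 (s • Y - 1) := by
    rw [← fromBlocks_one, fromBlocks_smul, sub_eq_add_neg, fromBlocks_neg, fromBlocks_add]
    simp [sub_eq_add_neg]
  rw [hblocks]
  simp [fromBlocks_multiply, Matrix.mul_sub, nonsing_inv_mul _ ((isUnit_iff_isUnit_det _).mp hX),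
    nonsing_inv_mul _ ((isUnit_iff_isUnit_det _).mp hY)]

end Blocks

end Matrix

theorem stmt_9 {n₁ n₂ : ℕ}
    (E A T : Matrix (Fin n₁ ⊕ Fin n₂) (Fin n₁ ⊕ Fin n₂) ℂ) (s₀ : ℂ)
    (hreg : IsUnit (s₀ • E - A)) (hT : IsUnit T)
    (E₁ : Matrix (Fin n₁) (Fin n₁) ℂ) (E₂ : Matrix (Fin n₂) (Fin n₂) ℂ)
    (hE₁ : IsUnit E₁) (hE₂ : IsNilpotent E₂)
    (hdec : T⁻¹ * ((s₀ • E - A)⁻¹ * E) * T = Matrix.fromBlocks E₁ 0 0 E₂) :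
    IsUnit (s₀ • E₂ - 1) ∧
    (Matrix.fromBlocks E₁⁻¹ 0 0 (s₀ • E₂ - 1)⁻¹ * T⁻¹ * (s₀ • E - A)⁻¹) * E * T
        = Matrix.fromBlocks 1 0 0 ((s₀ • E₂ - 1)⁻¹ * E₂) ∧
    (Matrix.fromBlocks E₁⁻¹ 0 0 (s₀ • E₂ - 1)⁻¹ * T⁻¹ * (s₀ • E - A)⁻¹) * A * T
        = Matrix.fromBlocks (s₀ • (1 : Matrix (Fin n₁) (Fin n₁) ℂ) - E₁⁻¹) 0 0 1 ∧
    IsNilpotent ((s₀ • E₂ - 1)⁻¹ * E₂) := by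
  have hunit : IsUnit (s₀ • E₂ - 1) := (hE₂.smul s₀).isUnit_sub_one
  have hdecA : T⁻¹ * ((s₀ • E - A)⁻¹ * A) * T = s₀ • fromBlocks E₁ 0 0 E₂ - 1 := by
    rw [nonsing_inv_smul_sub_mul_eq_smul_sub_one hreg, nonsing_inv_mul_smul_sub_one_mul hT, hdec]
  refine ⟨hunit, ?_, ?_, hE₂.nonsing_inv_smul_sub_one_mul s₀⟩
  · rw [← fromBlocks_nonsing_inv_mul_fromBlocks hE₁, ← hdec]
    simp only [Matrix.mul_assoc]
  · rw [← fromBlocks_nonsing_inv_mul_smul_fromBlocks_sub_one hE₁ hunit, ← hdecA]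
    simp only [Matrix.mul_assoc]
end

section
/- Let E, A ∈ ℂ^{n×n} with pencil (E, A) regular, Q, P invertible with QEP = diag(I_{n₁}, N_f), QAP = diag(A_s, I_{n₂}), N_f nilpotent, QB = [B_s; B_f]. If there exists K_s with all eigenvalues of A_s + B_s K_s of modulus < 1, then K = [K_s, 0]P^{-1} satisfies: every s ∈ ℂ with det(sE − (A + BK)) = 0 has |s| < 1. -/
/-!
In the Weierstrass coordinates given by `Q` and `P`, the feedback `K = [Kₛ, 0] P⁻¹` acts only on
the slow states, so `Q (sE - (A + BK)) P` is block lower triangular with diagonal blocks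
`s - (Aₛ + Bₛ Kₛ)` and `s N_f - 1`. The second block is invertible for every `s` because `N_f` is
nilpotent, hence every finite generalized eigenvalue of the closed loop is an eigenvalue of
`Aₛ + Bₛ Kₛ`.
-/

open Matrix

section WeierstrassForm

variable {ι₁ ι₂ μ R : Type*} [Fintype ι₁] [Fintype ι₂] [DecidableEq ι₁] [DecidableEq ι₂]
  [Fintype μ] [CommRing R]
  {E A Q P : Matrix (ι₁ ⊕ ι₂) (ι₁ ⊕ ι₂) R} {B : Matrix (ι₁ ⊕ ι₂) μ R}
  {As : Matrix ι₁ ι₁ R} {Nf : Matrix ι₂ ι₂ R} {Bs : Matrix ι₁ μ R} {Bf : Matrix ι₂ μ R}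

theorem weierstrass_mul_slowFeedback_mul (Ks : Matrix μ ι₁ R) (hP : IsUnit P)
    (hB : Q * B = fromRows Bs Bf) :
    Q * (B * (fromCols Ks (0 : Matrix μ ι₂ R) * P⁻¹)) * P = fromBlocks (Bs * Ks) 0 (Bf * Ks) 0 := by
  have hPinv : P⁻¹ * P = 1 := nonsing_inv_mul P ((isUnit_iff_isUnit_det P).mp hP)
  calc Q * (B * (fromCols Ks (0 : Matrix μ ι₂ R) * P⁻¹)) * P
      = (Q * B) * fromCols Ks (0 : Matrix μ ι₂ R) * (P⁻¹ * P) := by simp only [Matrix.mul_assoc]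
    _ = fromRows Bs Bf * fromCols Ks (0 : Matrix μ ι₂ R) := by rw [hB, hPinv, Matrix.mul_one]
    _ = fromBlocks (Bs * Ks) 0 (Bf * Ks) 0 := by
        rw [fromRows_mul_fromCols, Matrix.mul_zero, Matrix.mul_zero]

theorem weierstrass_closedLoop_pencil (Ks : Matrix μ ι₁ R) (s : R) (hP : IsUnit P)
    (hE : Q * E * P = fromBlocks 1 0 0 Nf) (hA : Q * A * P = fromBlocks As 0 0 1)
    (hB : Q * B = fromRows Bs Bf) :
    Q * (s • E - (A + B * (fromCols Ks (0 : Matrix μ ι₂ R) * P⁻¹))) * P =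
      fromBlocks (s • 1 - (As + Bs * Ks)) 0 (-(Bf * Ks)) (s • Nf - 1) := by
  rw [Matrix.mul_sub, Matrix.sub_mul, Matrix.mul_add, Matrix.add_mul, Matrix.mul_smul,
    Matrix.smul_mul, hE, hA, weierstrass_mul_slowFeedback_mul Ks hP hB, fromBlocks_add,
    fromBlocks_smul, sub_eq_add_neg, fromBlocks_neg, fromBlocks_add]
  simp only [smul_zero, add_zero, zero_add, neg_zero, sub_eq_add_neg]

theorem det_slow_eq_zero_of_det_closedLoop_eq_zero (Ks : Matrix μ ι₁ R) (s : R)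
    (hP : IsUnit P) (hNf : IsNilpotent Nf)
    (hE : Q * E * P = fromBlocks 1 0 0 Nf) (hA : Q * A * P = fromBlocks As 0 0 1)
    (hB : Q * B = fromRows Bs Bf)
    (hs : (s • E - (A + B * (fromCols Ks (0 : Matrix μ ι₂ R) * P⁻¹))).det = 0) :
    (s • (1 : Matrix ι₁ ι₁ R) - (As + Bs * Ks)).det = 0 := by
  have hfast : IsUnit (s • Nf - 1).det :=
    (isUnit_iff_isUnit_det _).mp (hNf.smul s).isUnit_sub_one
  have hprod : (s • (1 : Matrix ι₁ ι₁ R) - (As + Bs * Ks)).det * (s • Nf - 1).det = 0 := by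
    rw [← det_fromBlocks_zero₁₂ _ (-(Bf * Ks)), ← weierstrass_closedLoop_pencil Ks s hP hE hA hB,
      det_mul, det_mul, hs, mul_zero, zero_mul]
  exact hfast.mul_left_eq_zero.mp hprod

end WeierstrassForm

theorem stmt_13_general {n₁ n₂ m : ℕ}
    (E A Q P : Matrix (Fin n₁ ⊕ Fin n₂) (Fin n₁ ⊕ Fin n₂) ℂ)
    (B : Matrix (Fin n₁ ⊕ Fin n₂) (Fin m) ℂ)
    (As : Matrix (Fin n₁) (Fin n₁) ℂ) (Nf : Matrix (Fin n₂) (Fin n₂) ℂ)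
    (Bs : Matrix (Fin n₁) (Fin m) ℂ) (Bf : Matrix (Fin n₂) (Fin m) ℂ)
    (Ks : Matrix (Fin m) (Fin n₁) ℂ)
    (hP : IsUnit P) (hNf : IsNilpotent Nf)
    (hE : Q * E * P = Matrix.fromBlocks 1 0 0 Nf)
    (hA : Q * A * P = Matrix.fromBlocks As 0 0 1)
    (hB : Q * B = Matrix.fromRows Bs Bf)
    (hstab : ∀ s : ℂ, (s • (1 : Matrix (Fin n₁) (Fin n₁) ℂ) - (As + Bs * Ks)).det = 0 →
      ‖s‖ < 1) :
    ∀ s : ℂ, (s • E - (A + B * (Matrix.fromCols Ks (0 : Matrix (Fin m) (Fin n₂) ℂ) * P⁻¹))).det = 0 →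
      ‖s‖ < 1 :=
  fun s hs => hstab s (det_slow_eq_zero_of_det_closedLoop_eq_zero Ks s hP hNf hE hA hB hs)

theorem stmt_13 {n₁ n₂ m : ℕ}
    (E A Q P : Matrix (Fin n₁ ⊕ Fin n₂) (Fin n₁ ⊕ Fin n₂) ℂ)
    (B : Matrix (Fin n₁ ⊕ Fin n₂) (Fin m) ℂ)
    (As : Matrix (Fin n₁) (Fin n₁) ℂ) (Nf : Matrix (Fin n₂) (Fin n₂) ℂ)
    (Bs : Matrix (Fin n₁) (Fin m) ℂ) (Bf : Matrix (Fin n₂) (Fin m) ℂ)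
    (Ks : Matrix (Fin m) (Fin n₁) ℂ)
    (hreg : ∃ s : ℂ, (s • E - A).det ≠ 0)
    (hQ : IsUnit Q) (hP : IsUnit P) (hNf : IsNilpotent Nf)
    (hE : Q * E * P = Matrix.fromBlocks 1 0 0 Nf)
    (hA : Q * A * P = Matrix.fromBlocks As 0 0 1)
    (hB : Q * B = Matrix.fromRows Bs Bf)
    (hstab : ∀ s : ℂ, (s • (1 : Matrix (Fin n₁) (Fin n₁) ℂ) - (As + Bs * Ks)).det = 0 →
      ‖s‖ < 1) :
    ∀ s : ℂ, (s • E - (A + B * (Matrix.fromCols Ks (0 : Matrix (Fin m) (Fin n₂) ℂ) * P⁻¹))).det = 0 →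
      ‖s‖ < 1 :=
  stmt_13_general E A Q P B As Nf Bs Bf Ks hP hNf hE hA hB hstab
end

section
/- Let E, A ∈ ℂ^{n×n} with s₀E − A invertible, and suppose matrices N, M, V, W, R₀, R₁ (with N, W invertible) satisfy EN = (s₀E − A)M, (s₀E − A)V = AW, and ER₁ = AR₀ + B. Then (s₀E − A)^{-1}B = MN^{-1}R₁ − VW^{-1}R₀. -/
open Matrix

theorem stmt_19 {n m : ℕ} (E A N M V W : Matrix (Fin n) (Fin n) ℂ)
    (B R₀ R₁ : Matrix (Fin n) (Fin m) ℂ) (s₀ : ℂ)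
    (hreg : IsUnit (s₀ • E - A)) (hN : IsUnit N) (hW : IsUnit W)
    (h1 : E * N = (s₀ • E - A) * M)
    (h2 : (s₀ • E - A) * V = A * W)
    (h3 : E * R₁ = A * R₀ + B) :
    (s₀ • E - A)⁻¹ * B = M * N⁻¹ * R₁ - V * W⁻¹ * R₀ := by
  set S := s₀ • E - A with hS
  have hSd := (Matrix.isUnit_iff_isUnit_det _).mp hreg
  have hNd := (Matrix.isUnit_iff_isUnit_det _).mp hN
  have hWd := (Matrix.isUnit_iff_isUnit_det _).mp hW
  have hM : M * N⁻¹ = S⁻¹ * E := by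
    have := congrArg (fun X => S⁻¹ * X * N⁻¹) h1.symm
    simpa [Matrix.mul_assoc, Matrix.nonsing_inv_mul_cancel_left _ _ hSd,
      Matrix.mul_nonsing_inv_cancel_right _ _ hNd] using this
  have hV : V * W⁻¹ = S⁻¹ * A := by
    have := congrArg (fun X => S⁻¹ * X * W⁻¹) h2
    simpa [Matrix.mul_assoc, Matrix.nonsing_inv_mul_cancel_left _ _ hSd,
      Matrix.mul_nonsing_inv_cancel_right _ _ hWd] using this
  have hB : B = E * R₁ - A * R₀ := by rw [h3]; abel
  rw [hB, hM, hV, Matrix.mul_sub, Matrix.mul_assoc, Matrix.mul_assoc]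
end
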